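/- Collinson's algebraic characterization (sufficiency): let K be an η-self-adjoint endomorphism of ℝ⁴ such that P := K − (1/4)·tr(K)·id satisfies 4·(P∘P) = tr(P∘P)·id and tr(P∘P) ≠ 0, such that 2·tr(K∘K) ≥ (tr K)², and such that η(Kx,x) < 0 for every timelike vector x. Then there exists a 2-form A on ℝ⁴ with Â∘Â = K, i.e. K is the square of a skew-symmetric tensor. -/

import Mathlib

open Matrix Real

/-- Spacetime `ℝ⁴` with the standard basis. -/
abbrev V4 : Type := Fin 4 → ℝ

/-- `4×4` real matrices: components of bilinear forms / endomorphisms of `ℝ⁴`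
in the standard basis `(e₀,e₁,e₂,e₃)`. -/
abbrev Mat4 : Type := Matrix (Fin 4) (Fin 4) ℝ

/-- The Minkowski metric `diag(-1,1,1,1)` (it equals its own inverse). -/
noncomputable def ηm : Mat4 := Matrix.diagonal ![-1, 1, 1, 1]

/-- The Minkowski bilinear form `η(x,y) = -x₀y₀ + x₁y₁ + x₂y₂ + x₃y₃`. -/
noncomputable def ηb (x y : V4) : ℝ := x ⬝ᵥ ηm *ᵥ y

/-- A vector `x` is timelike if `η(x,x) < 0`. -/
noncomputable def Timelike (x : V4) : Prop := ηb x x < 0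

/-- Evaluation of the bilinear form with component matrix `B`:
`B(x,y) = Σ xᵅ B_{αβ} yᵝ`. -/
noncomputable def bil (B : Mat4) (x y : V4) : ℝ := x ⬝ᵥ B *ᵥ y

/-- A 2-form is a skew-symmetric bilinear form. -/
noncomputable def IsTwoForm (B : Mat4) : Prop := Bᵀ = -B

/-- The endomorphism `B̂` associated with the bilinear form `B`, i.e. the unique
endomorphism with `η(B̂x, y) = B(x,y)` for all `x, y`.  (Indeed
`ηb (hat B *ᵥ x) y = bil B x y`.) -/
noncomputable def hat (B : Mat4) : Mat4 := ηm * Bᵀ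

/-- The totally antisymmetric Levi-Civita symbol on four indices, `ε₀₁₂₃ = 1`. -/
noncomputable def lc (a b c d : Fin 4) : ℝ :=
  (((b : ℕ) : ℝ) - ((a : ℕ) : ℝ)) * (((c : ℕ) : ℝ) - ((a : ℕ) : ℝ)) *
    (((d : ℕ) : ℝ) - ((a : ℕ) : ℝ)) * (((c : ℕ) : ℝ) - ((b : ℕ) : ℝ)) *
    (((d : ℕ) : ℝ) - ((b : ℕ) : ℝ)) * (((d : ℕ) : ℝ) - ((c : ℕ) : ℝ)) / 12

/-- The Hodge dual of a 2-form:
`(*F)(e_α,e_β) = (1/2) Σ ε_{αβγδ} η^{γμ} η^{δν} F(e_μ,e_ν)`. -/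
noncomputable def hodge (F : Mat4) : Mat4 :=
  Matrix.of fun α β => (1/2) * ∑ γ, ∑ δ, ∑ μ, ∑ ν, lc α β γ δ * ηm γ μ * ηm δ ν * F μ ν

/-- A unitary 2-form: `tr(Û∘Û) = 2` and `tr(Û∘(*U)̂) = 0`. -/
noncomputable def IsUnitary (U : Mat4) : Prop :=
  IsTwoForm U ∧ (hat U * hat U).trace = 2 ∧ (hat U * hat (hodge U)).trace = 0

/-- An endomorphism `L` is η-self-adjoint if `η(Lx,y) = η(x,Ly)` for all `x, y`. -/
noncomputable def SelfAdj (L : Mat4) : Prop := ∀ x y : V4, ηb (L *ᵥ x) y = ηb x (L *ᵥ y)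

/-! ### Auxiliary lemmas -/

lemma etab_expl (x y : V4) :
    ηb x y = -(x 0 * y 0) + x 1 * y 1 + x 2 * y 2 + x 3 * y 3 := by
  simp [ηb, ηm, dotProduct, Matrix.mulVec_diagonal, Fin.sum_univ_four]

lemma etab_symm (x y : V4) : ηb x y = ηb y x := by
  rw [etab_expl, etab_expl]; ring

lemma etab_smul_left (c : ℝ) (x y : V4) : ηb (c • x) y = c * ηb x y := by
  simp [etab_expl]; ring

lemma etab_smul_right (c : ℝ) (x y : V4) : ηb x (c • y) = c * ηb x y := by
  simp [etab_expl]; ring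

lemma etab_add_left (x x' y : V4) : ηb (x + x') y = ηb x y + ηb x' y := by
  simp [etab_expl]; ring

lemma etab_add_right (x y y' : V4) : ηb x (y + y') = ηb x y + ηb x y' := by
  simp [etab_expl]; ring

lemma etab_sub_right (x y y' : V4) : ηb x (y - y') = ηb x y - ηb x y' := by
  simp [etab_expl]; ring

lemma etab_zero_right (x : V4) : ηb x 0 = 0 := by
  simp [etab_expl]

lemma etab_mulVec_left (M : Mat4) (x y : V4) :
    ηb (M *ᵥ x) y = x ⬝ᵥ ((Mᵀ * ηm) *ᵥ y) := by
  rw [ηb, dotProduct_comm, dotProduct_mulVec, dotProduct_comm, ← Matrix.mulVec_transpose,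
    Matrix.mulVec_mulVec]

lemma etab_mulVec_right (M : Mat4) (x y : V4) :
    ηb x (M *ᵥ y) = x ⬝ᵥ ((ηm * M) *ᵥ y) := by
  rw [ηb, Matrix.mulVec_mulVec]

lemma sa_vec (M : Mat4) (hM : Mᵀ * ηm = ηm * M) (x y : V4) :
    ηb (M *ᵥ x) y = ηb x (M *ᵥ y) := by
  rw [etab_mulVec_left, etab_mulVec_right, hM]

lemma etam_sq : ηm * ηm = (1 : Mat4) := by
  ext i j
  fin_cases i <;> fin_cases j <;>
    simp [ηm, Matrix.mul_apply, Matrix.diagonal_apply, Matrix.one_apply, Fin.sum_univ_four]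

lemma etam_symm : ηmᵀ = ηm := Matrix.diagonal_transpose _

lemma selfadj_mat (K : Mat4) (hsa : SelfAdj K) : Kᵀ * ηm = ηm * K := by
  ext i j
  have h := hsa (Pi.single i 1) (Pi.single j 1)
  rw [etab_mulVec_left, etab_mulVec_right] at h
  simpa [Matrix.mulVec_single, Pi.single_apply, dotProduct, Finset.sum_ite_eq'] using h

lemma spacelike (u w : V4) (hu : ηb u u < 0) (ho : ηb u w = 0) (hw : w ≠ 0) :
    0 < ηb w w := by
  have eu : ηb u u = -(u 0 * u 0) + u 1 * u 1 + u 2 * u 2 + u 3 * u 3 := etab_expl u u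
  have eo : ηb u w = -(u 0 * w 0) + u 1 * w 1 + u 2 * w 2 + u 3 * w 3 := etab_expl u w
  have ew : ηb w w = -(w 0 * w 0) + w 1 * w 1 + w 2 * w 2 + w 3 * w 3 := etab_expl w w
  rw [eu] at hu; rw [eo] at ho; rw [ew]
  have hu0 : u 0 ≠ 0 := by
    intro h; rw [h] at hu
    nlinarith [sq_nonneg (u 1), sq_nonneg (u 2), sq_nonneg (u 3)]
  by_cases hsp : w 1 = 0 ∧ w 2 = 0 ∧ w 3 = 0
  · obtain ⟨h1, h2, h3⟩ := hsp
    have hw0 : w 0 = 0 := by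
      rw [h1, h2, h3] at ho
      have : u 0 * w 0 = 0 := by linarith
      exact (mul_eq_zero.mp this).resolve_left hu0
    exact absurd (funext fun i => by fin_cases i <;> simp [hw0, h1, h2, h3]) hw
  · have hW : 0 < w 1 * w 1 + w 2 * w 2 + w 3 * w 3 := by
      rcases not_and_or.mp hsp with h | h
      · nlinarith [mul_self_pos.mpr h, mul_self_nonneg (w 2), mul_self_nonneg (w 3)]
      rcases not_and_or.mp h with h | h
      · nlinarith [mul_self_pos.mpr h, mul_self_nonneg (w 1), mul_self_nonneg (w 3)]
      · nlinarith [mul_self_pos.mpr h, mul_self_nonneg (w 1), mul_self_nonneg (w 2)]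
    by_contra hng
    push_neg at hng
    have hb : 0 < w 0 * w 0 := lt_of_lt_of_le hW (by linarith)
    have hU0 : 0 ≤ u 1 * u 1 + u 2 * u 2 + u 3 * u 3 := by
      nlinarith [mul_self_nonneg (u 1), mul_self_nonneg (u 2), mul_self_nonneg (u 3)]
    have hU : u 1 * u 1 + u 2 * u 2 + u 3 * u 3 < u 0 * u 0 := by
      nlinarith [mul_self_nonneg (w 0)]
    have hS : (u 1 * w 1 + u 2 * w 2 + u 3 * w 3) ^ 2 ≤
        (u 1 * u 1 + u 2 * u 2 + u 3 * u 3) * (w 1 * w 1 + w 2 * w 2 + w 3 * w 3) := by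
      nlinarith [sq_nonneg (u 1 * w 2 - u 2 * w 1), sq_nonneg (u 1 * w 3 - u 3 * w 1),
        sq_nonneg (u 2 * w 3 - u 3 * w 2)]
    have hkey : (u 0 * w 0) ^ 2 = (u 1 * w 1 + u 2 * w 2 + u 3 * w 3) ^ 2 := by
      rw [show u 0 * w 0 = u 1 * w 1 + u 2 * w 2 + u 3 * w 3 by linarith]
    have hr : (u 0 * u 0) * (w 0 * w 0) = (u 0 * w 0) ^ 2 := by ring
    linarith [mul_lt_mul_of_pos_right hU hb,
      mul_le_mul_of_nonneg_left (show w 1 * w 1 + w 2 * w 2 + w 3 * w 3 ≤ w 0 * w 0 by linarith) hU0,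
      hS, hkey, hr]

lemma trace_eq_sum_mulVec (M : Mat4) : M.trace = ∑ i, (M *ᵥ Pi.single i 1) i := by
  simp [Matrix.trace, Matrix.diag, Matrix.mulVec_single]

lemma sum_single_smul (f : V4) : ∑ i, (f i) • (Pi.single i 1 : V4) = f := by
  rw [← Finset.univ_sum_single f]
  congr 1; funext i; funext j; simp [Pi.single_apply]

lemma exists_nonzero_col (Q : Mat4) (htr : Q.trace = 2) :
    ∃ i, Q *ᵥ (Pi.single i 1) ≠ (0 : V4) := by
  by_contra h
  push_neg at h
  rw [trace_eq_sum_mulVec] at htr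
  simp only [h] at htr
  norm_num at htr

lemma exists_orth (Q : Mat4) (hQQ : Q * Q = Q) (htr : Q.trace = 2)
    (u : V4) (hu : Q *ᵥ u = u) (hune : u ≠ 0) (huu : ηb u u ≠ 0) :
    ∃ v : V4, v ≠ 0 ∧ Q *ᵥ v = v ∧ ηb u v = 0 := by
  by_contra hcon
  push_neg at hcon
  have hcol : ∀ i : Fin 4, Q *ᵥ Pi.single i 1 =
      ((ηb u (Q *ᵥ Pi.single i 1)) / (ηb u u)) • u := by
    intro i
    set y : V4 := Q *ᵥ Pi.single i 1 with hy
    set v : V4 := (ηb u u) • y - (ηb u y) • u with hv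
    have hQv : Q *ᵥ v = v := by
      rw [hv, Matrix.mulVec_sub, Matrix.mulVec_smul, Matrix.mulVec_smul, hu, hy,
        Matrix.mulVec_mulVec, hQQ]
    have hov : ηb u v = 0 := by
      rw [hv, etab_sub_right, etab_smul_right, etab_smul_right]; ring
    have hv0 : v = 0 := by
      by_contra hne
      exact hcon v hne hQv hov
    have heq : (ηb u u) • y = (ηb u y) • u := by rwa [sub_eq_zero] at hv0
    calc y = (ηb u u)⁻¹ • ((ηb u u) • y) := by rw [smul_smul, inv_mul_cancel₀ huu, one_smul]
    _ = (ηb u u)⁻¹ • ((ηb u y) • u) := by rw [heq]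
    _ = ((ηb u y) / (ηb u u)) • u := by rw [smul_smul]; congr 1; field_simp
  set t : Fin 4 → ℝ := fun i => (ηb u (Q *ᵥ Pi.single i 1)) / (ηb u u) with ht
  have htr' : Q.trace = ∑ i, t i * u i := by
    rw [trace_eq_sum_mulVec]
    apply Finset.sum_congr rfl
    intro i _
    rw [hcol i]
    simp [ht]
  have hQu : Q *ᵥ u = (∑ i, t i * u i) • u := by
    have hu' : u = ∑ i, (u i) • (Pi.single i 1 : V4) := (sum_single_smul u).symm
    calc Q *ᵥ u = Q *ᵥ (∑ i, (u i) • (Pi.single i 1 : V4)) := by rw [← hu']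
    _ = ∑ i, (u i) • (Q *ᵥ (Pi.single i 1 : V4)) := by
        simp only [← Matrix.mulVecLin_apply, map_sum, _root_.map_smul]
    _ = ∑ i, (t i * u i) • u := by
        apply Finset.sum_congr rfl
        intro i _
        rw [hcol i, smul_smul]
        congr 1
        simp only [ht]
        ring
    _ = (∑ i, t i * u i) • u := by rw [Finset.sum_smul]
  have hs : (∑ i, t i * u i) = 1 := by
    have h1 : (∑ i, t i * u i) • u = u := by rw [← hQu, hu]
    obtain ⟨j, hj⟩ := Function.ne_iff.mp hune
    have h2 := congrFun h1 j
    simp only [Pi.smul_apply, smul_eq_mul, Pi.zero_apply] at h2 hj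
    have h3 : (∑ i, t i * u i) * u j = 1 * u j := by rw [one_mul]; exact h2
    exact mul_right_cancel₀ hj h3
  rw [htr', hs] at htr
  norm_num at htr

set_option maxHeartbeats 2000000 in
/-- Collinson's algebraic characterization (sufficiency): an η-self-adjoint
endomorphism `K` whose traceless part satisfies the Rainich conditions, with
`2·tr(K∘K) ≥ (tr K)²`, and with `η(Kx,x) < 0` for every timelike `x`, is the
square of a skew-symmetric tensor. -/
theorem stmt9 (K : Mat4) (hsa : SelfAdj K) (P : Mat4)
    (hP : P = K - ((1/4) * K.trace) • (1 : Mat4))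
    (h1 : (4 : ℝ) • (P * P) = (P * P).trace • (1 : Mat4))
    (h2 : (P * P).trace ≠ 0)
    (h3 : (K.trace)^2 ≤ 2 * (K * K).trace)
    (h4 : ∀ x : V4, Timelike x → ηb (K *ᵥ x) x < 0) :
    ∃ A : Mat4, IsTwoForm A ∧ hat A * hat A = K := by
  have hK : Kᵀ * ηm = ηm * K := selfadj_mat K hsa
  set a : ℝ := K.trace with ha
  have hPsa : Pᵀ * ηm = ηm * P := by
    rw [hP]
    rw [Matrix.transpose_sub, Matrix.transpose_smul, Matrix.transpose_one,
      Matrix.sub_mul, Matrix.mul_sub, hK, smul_mul_assoc, mul_smul_comm,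
      Matrix.one_mul, Matrix.mul_one]
  have htrP : P.trace = 0 := by
    rw [hP]
    simp [Matrix.trace_sub, Matrix.trace_smul, Matrix.trace_one]
    ring
  have hKPdec : K = P + ((1/4)*a) • (1 : Mat4) := by rw [hP]; abel
  have htrPP : (P * P).trace = (K * K).trace - a^2/4 := by
    have expand : P * P =
        K * K - ((1/4)*a) • K - ((1/4)*a) • K + (((1/4)*a)*((1/4)*a)) • (1 : Mat4) := by
      rw [hP]
      simp only [Matrix.sub_mul, Matrix.mul_sub, smul_mul_assoc, mul_smul_comm,
        Matrix.one_mul, Matrix.mul_one, smul_smul]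
      module
    rw [expand]
    simp [Matrix.trace_sub, Matrix.trace_add, Matrix.trace_smul, Matrix.trace_one, ← ha]
    ring
  have htrPPpos : 0 < (P * P).trace := by
    have h0 : 0 ≤ (P * P).trace := by rw [htrPP]; nlinarith [sq_nonneg a]
    exact lt_of_le_of_ne h0 (Ne.symm h2)
  set lam : ℝ := Real.sqrt ((P * P).trace / 4) with hlamdef
  have hlampos : 0 < lam := Real.sqrt_pos.mpr (by linarith)
  have hlamsq : lam^2 = (P * P).trace / 4 := Real.sq_sqrt (by linarith)
  have hPP : P * P = (lam*lam) • (1 : Mat4) := by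
    have h4' : (4:ℝ) • (P * P) = (4:ℝ) • ((lam*lam) • (1 : Mat4)) := by
      rw [h1, smul_smul]
      congr 1
      nlinarith [hlamsq]
    exact smul_right_injective Mat4 (by norm_num : (4:ℝ) ≠ 0) h4'
  have habs : a^2 ≤ 16 * lam^2 := by
    have h5 : 4 * lam^2 = (K * K).trace - a^2/4 := by rw [← htrPP, hlamsq]; ring
    nlinarith [h3]
  -- projections
  have h2l : (2*lam) ≠ 0 := by positivity
  set Qp : Mat4 := (2*lam)⁻¹ • (P + lam • 1) with hQpdef
  set Qm : Mat4 := (2*lam)⁻¹ • (lam • 1 - P) with hQmdef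
  have hQsum : Qp + Qm = 1 := by
    rw [hQpdef, hQmdef, ← smul_add]
    have e : (P + lam • 1) + (lam • (1:Mat4) - P) = (2*lam) • 1 := by module
    rw [e, smul_smul, inv_mul_cancel₀ h2l, one_smul]
  have hQpQm : Qp * Qm = 0 := by
    rw [hQpdef, hQmdef, smul_mul_assoc, mul_smul_comm]
    have e : (P + lam • 1) * (lam • (1:Mat4) - P) = 0 := by
      simp only [Matrix.mul_sub, Matrix.sub_mul, Matrix.mul_add, Matrix.add_mul,
        Matrix.mul_smul, Matrix.smul_mul, Matrix.mul_one, Matrix.one_mul, hPP]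
      module
    rw [e, smul_zero, smul_zero]
  have hQpQp : Qp * Qp = Qp := by
    rw [hQpdef, smul_mul_assoc, mul_smul_comm]
    have e : (P + lam • 1) * (P + lam • 1) = (2*lam) • (P + lam • 1) := by
      simp only [Matrix.mul_add, Matrix.add_mul, Matrix.mul_smul, Matrix.smul_mul,
        Matrix.mul_one, Matrix.one_mul, hPP]
      module
    rw [e, smul_smul, smul_smul, mul_assoc, inv_mul_cancel₀ h2l, mul_one]
  have hQmQm : Qm * Qm = Qm := by
    rw [hQmdef, smul_mul_assoc, mul_smul_comm]
    have e : (lam • (1:Mat4) - P) * (lam • (1:Mat4) - P) = (2*lam) • (lam • (1:Mat4) - P) := by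
      simp only [Matrix.mul_sub, Matrix.sub_mul, Matrix.mul_smul, Matrix.smul_mul,
        Matrix.mul_one, Matrix.one_mul, hPP]
      module
    rw [e, smul_smul, smul_smul, mul_assoc, inv_mul_cancel₀ h2l, mul_one]
  have hPQp : P * Qp = lam • Qp := by
    rw [hQpdef, mul_smul_comm]
    have e : P * (P + lam • 1) = lam • (P + lam • 1) := by
      simp only [Matrix.mul_add, Matrix.mul_smul, Matrix.mul_one, hPP]
      module
    rw [e, smul_comm]
  have hPQm : P * Qm = (-lam) • Qm := by
    rw [hQmdef, mul_smul_comm]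
    have e : P * (lam • (1:Mat4) - P) = (-lam) • (lam • (1:Mat4) - P) := by
      simp only [Matrix.mul_sub, Matrix.mul_smul, Matrix.mul_one, hPP]
      module
    rw [e, smul_comm]
  have hQpsa : Qpᵀ * ηm = ηm * Qp := by
    rw [hQpdef, Matrix.transpose_smul, Matrix.transpose_add, Matrix.transpose_smul,
      Matrix.transpose_one, smul_mul_assoc, mul_smul_comm, Matrix.add_mul, Matrix.mul_add,
      hPsa, smul_mul_assoc, mul_smul_comm, Matrix.one_mul, Matrix.mul_one]
  have hQmsa : Qmᵀ * ηm = ηm * Qm := by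
    rw [hQmdef, Matrix.transpose_smul, Matrix.transpose_sub, Matrix.transpose_smul,
      Matrix.transpose_one, smul_mul_assoc, mul_smul_comm, Matrix.sub_mul, Matrix.mul_sub,
      hPsa, smul_mul_assoc, mul_smul_comm, Matrix.one_mul, Matrix.mul_one]
  have htrQp : Qp.trace = 2 := by
    rw [hQpdef]
    rw [Matrix.trace_smul, Matrix.trace_add, Matrix.trace_smul, Matrix.trace_one, htrP]
    field_simp
    rw [smul_eq_mul, smul_eq_mul, Fintype.card_fin, Nat.cast_ofNat, div_mul_eq_mul_div, one_mul,
      div_eq_iff h2l]; ring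
  have htrQm : Qm.trace = 2 := by
    rw [hQmdef]
    rw [Matrix.trace_smul, Matrix.trace_sub, Matrix.trace_smul, Matrix.trace_one, htrP]
    field_simp
    rw [smul_eq_mul, smul_eq_mul, Fintype.card_fin, Nat.cast_ofNat, div_mul_eq_mul_div, one_mul,
      div_eq_iff h2l]; ring
  -- vector-level facts
  have hQpvec := sa_vec Qp hQpsa
  have horthpm : ∀ x y : V4, Qp *ᵥ x = x → Qm *ᵥ y = y → ηb x y = 0 := by
    intro x y hx hy
    calc ηb x y = ηb (Qp *ᵥ x) y := by rw [hx]
    _ = ηb x (Qp *ᵥ y) := hQpvec x y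
    _ = ηb x (Qp *ᵥ (Qm *ᵥ y)) := by rw [hy]
    _ = ηb x ((Qp * Qm) *ᵥ y) := by rw [Matrix.mulVec_mulVec]
    _ = 0 := by rw [hQpQm, Matrix.zero_mulVec, etab_zero_right]
  have hKp : ∀ x : V4, Qp *ᵥ x = x → K *ᵥ x = (lam + (1/4)*a) • x := by
    intro x hx
    have hPx : P *ᵥ x = lam • x := by
      calc P *ᵥ x = P *ᵥ (Qp *ᵥ x) := by rw [hx]
      _ = (P * Qp) *ᵥ x := Matrix.mulVec_mulVec x P Qp
      _ = lam • (Qp *ᵥ x) := by rw [hPQp, Matrix.smul_mulVec]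
      _ = lam • x := by rw [hx]
    calc K *ᵥ x = (P + ((1/4)*a) • 1) *ᵥ x := by rw [← hKPdec]
    _ = P *ᵥ x + ((1/4)*a) • ((1 : Mat4) *ᵥ x) := by
        rw [Matrix.add_mulVec, Matrix.smul_mulVec]
    _ = lam • x + ((1/4)*a) • x := by rw [hPx, Matrix.one_mulVec]
    _ = (lam + (1/4)*a) • x := by rw [add_smul]
  have hKm : ∀ x : V4, Qm *ᵥ x = x → K *ᵥ x = ((1/4)*a - lam) • x := by
    intro x hx
    have hPx : P *ᵥ x = (-lam) • x := by
      calc P *ᵥ x = P *ᵥ (Qm *ᵥ x) := by rw [hx]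
      _ = (P * Qm) *ᵥ x := Matrix.mulVec_mulVec x P Qm
      _ = (-lam) • (Qm *ᵥ x) := by rw [hPQm, Matrix.smul_mulVec]
      _ = (-lam) • x := by rw [hx]
    calc K *ᵥ x = (P + ((1/4)*a) • 1) *ᵥ x := by rw [← hKPdec]
    _ = P *ᵥ x + ((1/4)*a) • ((1 : Mat4) *ᵥ x) := by
        rw [Matrix.add_mulVec, Matrix.smul_mulVec]
    _ = (-lam) • x + ((1/4)*a) • x := by rw [hPx, Matrix.one_mulVec]
    _ = ((1/4)*a - lam) • x := by rw [← add_smul]; congr 1; ring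
  -- the timelike eigenvector
  set u : V4 := Qp *ᵥ Pi.single 0 1 with hudef
  set u' : V4 := Qm *ᵥ Pi.single 0 1 with hu'def
  have hQpu : Qp *ᵥ u = u := by rw [hudef, Matrix.mulVec_mulVec, hQpQp]
  have hQmu' : Qm *ᵥ u' = u' := by rw [hu'def, Matrix.mulVec_mulVec, hQmQm]
  have hsplit : ηb u u + ηb u' u' = -1 := by
    have hdecomp : (Pi.single 0 1 : V4) = u + u' := by
      rw [hudef, hu'def, ← Matrix.add_mulVec, hQsum, Matrix.one_mulVec]
    have he00 : ηb (Pi.single 0 1 : V4) (Pi.single 0 1) = -1 := by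
      simp [etab_expl, Pi.single_apply]
    have hcross : ηb u u' = 0 := horthpm u u' hQpu hQmu'
    have hcross' : ηb u' u = 0 := by rw [etab_symm]; exact hcross
    rw [hdecomp, etab_add_left, etab_add_right, etab_add_right] at he00
    linarith
  have hlamed : (1/4)*a - lam ≤ 0 := by nlinarith
  have hutime : ηb u u < 0 := by
    by_contra hge
    push_neg at hge
    have h5 : ηb u' u' < 0 := by linarith
    have h6 := h4 u' (by simpa [Timelike] using h5)
    rw [hKm u' hQmu', etab_smul_left] at h6
    nlinarith
  have hune : u ≠ 0 := by
    intro h0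
    rw [h0] at hutime
    simp [etab_expl] at hutime
  have hppos : 0 < lam + (1/4)*a := by
    have h6 := h4 u (by simpa [Timelike] using hutime)
    rw [hKp u hQpu, etab_smul_left] at h6
    nlinarith
  -- rest of the basis
  obtain ⟨v, hvne, hQv, huv⟩ := exists_orth Qp hQpQp htrQp u hQpu hune (ne_of_lt hutime)
  have hvsp : 0 < ηb v v := spacelike u v hutime huv hvne
  obtain ⟨i0, hw0⟩ := exists_nonzero_col Qm htrQm
  set w : V4 := Qm *ᵥ Pi.single i0 1 with hwdef
  have hQw : Qm *ᵥ w = w := by rw [hwdef, Matrix.mulVec_mulVec, hQmQm]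
  have huw : ηb u w = 0 := horthpm u w hQpu hQw
  have hwsp : 0 < ηb w w := spacelike u w hutime huw hw0
  obtain ⟨z, hzne, hQz, hwz⟩ := exists_orth Qm hQmQm htrQm w hQw hw0 (ne_of_gt hwsp)
  have huz : ηb u z = 0 := horthpm u z hQpu hQz
  have hzsp : 0 < ηb z z := spacelike u z hutime huz hzne
  have hvw : ηb v w = 0 := horthpm v w hQv hQw
  have hvz : ηb v z = 0 := horthpm v z hQv hQz
  -- normalized basis
  set n0 : ℝ := Real.sqrt (-ηb u u) with hn0
  set n1 : ℝ := Real.sqrt (ηb v v) with hn1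
  set n2 : ℝ := Real.sqrt (ηb w w) with hn2
  set n3 : ℝ := Real.sqrt (ηb z z) with hn3
  have hn0pos : 0 < n0 := Real.sqrt_pos.mpr (by linarith)
  have hn1pos : 0 < n1 := Real.sqrt_pos.mpr hvsp
  have hn2pos : 0 < n2 := Real.sqrt_pos.mpr hwsp
  have hn3pos : 0 < n3 := Real.sqrt_pos.mpr hzsp
  have hn0sq : n0 * n0 = -ηb u u := Real.mul_self_sqrt (by linarith)
  have hn1sq : n1 * n1 = ηb v v := Real.mul_self_sqrt hvsp.le
  have hn2sq : n2 * n2 = ηb w w := Real.mul_self_sqrt hwsp.le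
  have hn3sq : n3 * n3 = ηb z z := Real.mul_self_sqrt hzsp.le
  set b0 : V4 := n0⁻¹ • u with hb0
  set b1 : V4 := n1⁻¹ • v with hb1
  set b2 : V4 := n2⁻¹ • w with hb2
  set b3 : V4 := n3⁻¹ • z with hb3
  have hb00 : ηb b0 b0 = -1 := by
    rw [hb0, etab_smul_left, etab_smul_right, show ηb u u = -(n0*n0) by linarith]
    field_simp
  have hb11 : ηb b1 b1 = 1 := by
    rw [hb1, etab_smul_left, etab_smul_right, ← hn1sq]
    field_simp
  have hb22 : ηb b2 b2 = 1 := by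
    rw [hb2, etab_smul_left, etab_smul_right, ← hn2sq]
    field_simp
  have hb33 : ηb b3 b3 = 1 := by
    rw [hb3, etab_smul_left, etab_smul_right, ← hn3sq]
    field_simp
  have hb01 : ηb b0 b1 = 0 := by rw [hb0, hb1, etab_smul_left, etab_smul_right, huv]; ring
  have hb02 : ηb b0 b2 = 0 := by rw [hb0, hb2, etab_smul_left, etab_smul_right, huw]; ring
  have hb03 : ηb b0 b3 = 0 := by rw [hb0, hb3, etab_smul_left, etab_smul_right, huz]; ring
  have hb12 : ηb b1 b2 = 0 := by rw [hb1, hb2, etab_smul_left, etab_smul_right, hvw]; ring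
  have hb13 : ηb b1 b3 = 0 := by rw [hb1, hb3, etab_smul_left, etab_smul_right, hvz]; ring
  have hb23 : ηb b2 b3 = 0 := by rw [hb2, hb3, etab_smul_left, etab_smul_right, hwz]; ring
  have hb10 : ηb b1 b0 = 0 := by rw [etab_symm]; exact hb01
  have hb20 : ηb b2 b0 = 0 := by rw [etab_symm]; exact hb02
  have hb30 : ηb b3 b0 = 0 := by rw [etab_symm]; exact hb03
  have hb21 : ηb b2 b1 = 0 := by rw [etab_symm]; exact hb12
  have hb31 : ηb b3 b1 = 0 := by rw [etab_symm]; exact hb13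
  have hb32 : ηb b3 b2 = 0 := by rw [etab_symm]; exact hb23
  have hKb0 : K *ᵥ b0 = (lam + (1/4)*a) • b0 := hKp b0 (by rw [hb0, Matrix.mulVec_smul, hQpu])
  have hKb1 : K *ᵥ b1 = (lam + (1/4)*a) • b1 := hKp b1 (by rw [hb1, Matrix.mulVec_smul, hQv])
  have hKb2 : K *ᵥ b2 = (-(lam - (1/4)*a)) • b2 := by
    rw [hKm b2 (by rw [hb2, Matrix.mulVec_smul, hQw])]
    congr 1
    ring
  have hKb3 : K *ᵥ b3 = (-(lam - (1/4)*a)) • b3 := by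
    rw [hKm b3 (by rw [hb3, Matrix.mulVec_smul, hQz])]
    congr 1
    ring
  -- the basis matrix
  set Bv : Fin 4 → V4 := ![b0, b1, b2, b3] with hBv
  set S : Mat4 := Matrix.of (fun i j => Bv j i) with hSdef
  have entry : ∀ i j, (Sᵀ * ηm * S) i j = ηb (Bv i) (Bv j) := by
    intro i j
    simp only [Matrix.mul_apply, Matrix.transpose_apply, Matrix.of_apply, hSdef, ηb,
      dotProduct, Matrix.mulVec, Finset.sum_mul, Finset.mul_sum]
    rw [Finset.sum_comm]
    apply Finset.sum_congr rfl
    intro k _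
    apply Finset.sum_congr rfl
    intro l _
    ring
  have hS : Sᵀ * ηm * S = ηm := by
    ext i j
    rw [entry i j]
    fin_cases i <;> fin_cases j <;>
      simp [hBv, ηm, Matrix.diagonal_apply, hb00, hb11, hb22, hb33, hb01, hb02, hb03,
        hb12, hb13, hb23, hb10, hb20, hb30, hb21, hb31, hb32]
  have hdetS : IsUnit S.det := by
    have hd := congrArg Matrix.det hS
    rw [Matrix.det_mul, Matrix.det_mul, Matrix.det_transpose] at hd
    have hdeteta : ηm.det = -1 := by
      simp [ηm, Matrix.det_diagonal, Fin.prod_univ_four]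
    rw [hdeteta] at hd
    refine isUnit_iff_ne_zero.mpr (fun h0 => ?_)
    rw [h0] at hd
    norm_num at hd
  have hSS : S * S⁻¹ = 1 := Matrix.mul_nonsing_inv S hdetS
  have hSiS : S⁻¹ * S = 1 := Matrix.nonsing_inv_mul S hdetS
  -- diagonal form
  set dv : Fin 4 → ℝ := ![lam + (1/4)*a, lam + (1/4)*a, -(lam - (1/4)*a), -(lam - (1/4)*a)]
    with hdv
  set D : Mat4 := Matrix.diagonal dv with hD
  have hcols : ∀ j, K *ᵥ Bv j = dv j • Bv j := by
    intro j
    fin_cases j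
    · simpa [hBv, hdv, Matrix.vecHead, Matrix.vecTail] using hKb0
    · simpa [hBv, hdv, Matrix.vecHead, Matrix.vecTail] using hKb1
    · simpa [hBv, hdv, Matrix.vecHead, Matrix.vecTail] using hKb2
    · simpa [hBv, hdv, Matrix.vecHead, Matrix.vecTail] using hKb3
  have hKS : K * S = S * D := by
    ext i j
    rw [hD, Matrix.mul_diagonal]
    calc (K * S) i j = (K *ᵥ Bv j) i := by
          simp [hSdef, Matrix.mul_apply, Matrix.mulVec, dotProduct]
    _ = dv j * Bv j i := by rw [hcols j]; simp
    _ = S i j * dv j := by rw [hSdef]; simp [mul_comm]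
  -- square-root entries
  set pc : ℝ := Real.sqrt (lam + (1/4)*a) with hpc
  set qc : ℝ := Real.sqrt (lam - (1/4)*a) with hqc
  have hp2 : pc * pc = lam + (1/4)*a := Real.mul_self_sqrt hppos.le
  have hq2 : qc * qc = lam - (1/4)*a := Real.mul_self_sqrt (by linarith)
  set F0 : Mat4 := Matrix.of ![![0,pc,0,0],![pc,0,0,0],![0,0,0,-qc],![0,0,qc,0]] with hF0
  have hF0sq : F0 * F0 = D := by
    ext i j
    fin_cases i <;> fin_cases j <;>
      simp [hF0, hD, hdv, Matrix.mul_apply, Fin.sum_univ_four, Matrix.diagonal_apply,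
        Matrix.vecHead, Matrix.vecTail] <;>
      linarith [hp2, hq2]
  have hF0T : F0ᵀ = Matrix.of ![![0,pc,0,0],![pc,0,0,0],![0,0,0,qc],![0,0,-qc,0]] := by
    ext i j
    fin_cases i <;> fin_cases j <;> simp [hF0, Matrix.vecHead, Matrix.vecTail]
  have hF0eta : ηm * F0 = -(F0ᵀ * ηm) := by
    rw [hF0T]
    ext i j
    fin_cases i <;> fin_cases j <;>
      simp [hF0, ηm, Matrix.mul_apply, Fin.sum_univ_four, Matrix.diagonal_apply,
        Matrix.mul_diagonal, Matrix.diagonal_mul, Matrix.vecMul, dotProduct,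
        Matrix.vecHead, Matrix.vecTail]
  have hTS : Sᵀ * ηm = ηm * S⁻¹ := by
    calc Sᵀ * ηm = Sᵀ * ηm * (S * S⁻¹) := by rw [hSS, Matrix.mul_one]
    _ = (Sᵀ * ηm * S) * S⁻¹ := by rw [Matrix.mul_assoc (Sᵀ * ηm)]
    _ = ηm * S⁻¹ := by rw [hS]
  have hTS2 : ηm * S = (S⁻¹)ᵀ * ηm := by
    have h7 := congrArg Matrix.transpose hTS
    rwa [Matrix.transpose_mul, Matrix.transpose_mul, etam_symm, Matrix.transpose_transpose]
      at h7
  have key : ηm * (S * F0 * S⁻¹) = -((S * F0 * S⁻¹)ᵀ * ηm) := by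
    have t1 : (S * F0 * S⁻¹)ᵀ = (S⁻¹)ᵀ * F0ᵀ * Sᵀ := by
      rw [Matrix.transpose_mul, Matrix.transpose_mul, ← Matrix.mul_assoc]
    rw [t1]
    calc ηm * (S * F0 * S⁻¹) = ηm * S * F0 * S⁻¹ := by
          rw [← Matrix.mul_assoc, ← Matrix.mul_assoc]
    _ = (S⁻¹)ᵀ * ηm * F0 * S⁻¹ := by rw [hTS2]
    _ = (S⁻¹)ᵀ * (ηm * F0) * S⁻¹ := by rw [Matrix.mul_assoc ((S⁻¹)ᵀ) ηm F0]
    _ = (S⁻¹)ᵀ * (-(F0ᵀ * ηm)) * S⁻¹ := by rw [hF0eta]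
    _ = -((S⁻¹)ᵀ * (F0ᵀ * ηm) * S⁻¹) := by rw [Matrix.mul_neg, Matrix.neg_mul]
    _ = -((S⁻¹)ᵀ * F0ᵀ * ηm * S⁻¹) := by rw [Matrix.mul_assoc ((S⁻¹)ᵀ) F0ᵀ ηm]
    _ = -((S⁻¹)ᵀ * F0ᵀ * (ηm * S⁻¹)) := by rw [Matrix.mul_assoc ((S⁻¹)ᵀ * F0ᵀ) ηm S⁻¹]
    _ = -((S⁻¹)ᵀ * F0ᵀ * (Sᵀ * ηm)) := by rw [hTS]
    _ = -((S⁻¹)ᵀ * F0ᵀ * Sᵀ * ηm) := by rw [Matrix.mul_assoc ((S⁻¹)ᵀ * F0ᵀ) Sᵀ ηm]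
  refine ⟨(S * F0 * S⁻¹)ᵀ * ηm, ?_, ?_⟩
  · show ((S * F0 * S⁻¹)ᵀ * ηm)ᵀ = -((S * F0 * S⁻¹)ᵀ * ηm)
    rw [Matrix.transpose_mul, Matrix.transpose_transpose, etam_symm]
    exact key
  · have hhat : hat ((S * F0 * S⁻¹)ᵀ * ηm) = S * F0 * S⁻¹ := by
      rw [hat, Matrix.transpose_mul, Matrix.transpose_transpose, etam_symm,
        ← Matrix.mul_assoc, etam_sq, Matrix.one_mul]
    rw [hhat]
    have hsq : (S * F0 * S⁻¹) * (S * F0 * S⁻¹) = S * (F0 * F0) * S⁻¹ := by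
      calc (S * F0 * S⁻¹) * (S * F0 * S⁻¹)
          = S * F0 * (S⁻¹ * S * (F0 * S⁻¹)) := by simp only [Matrix.mul_assoc]
      _ = S * F0 * (F0 * S⁻¹) := by rw [hSiS, Matrix.one_mul]
      _ = S * (F0 * F0) * S⁻¹ := by simp only [Matrix.mul_assoc]
    rw [hsq, hF0sq]
    calc S * D * S⁻¹ = (K * S) * S⁻¹ := by rw [hKS]
    _ = K * (S * S⁻¹) := by rw [Matrix.mul_assoc]
    _ = K := by rw [hSS, Matrix.mul_one]
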